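/- Let α = 1 + (ε/2) b for |b| bounded and ε small. Then for U(t,z) = r^{1/2}cos(θ/2), one has α U(t,z) = U(t + ε b r + O(ε²), z), where r² = t² + z²; more precisely there is a constant C (depending on the bound for b) such that U(t + εbr - Cε²r, z) ≤ α U(t,z) ≤ U(t + εbr + Cε²r, z) whenever ε is sufficiently small. -/

import Mathlib

/-!
In closed form `U(t,z)² = (r + t)/2`. Translating `t` to `t + d r` turns `r` into `r'`, and the
exact identities
`r'² = (r + d t)² + d² z²`  and
`(r (1 - d + d²) + d t)² = (1 - d)² r'² + d² (r + t)²`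
give `(1 + d) U(t,z)² ≤ U(t + d r, z)²` and `(1 - d) U(t + d r, z)² ≤ U(t,z)²` for
every `d`.
With `d = εb ± Cε²` it remains to compare `1 ± d` with `α² = 1 + εb + ε²b²/4`, which
`C = 2M²` does as soon as `εM ≤ 1/2`.
-/

open Real

/-- The function `U(t,z) = r^{1/2} cos(θ/2)`. -/
noncomputable def U (p : ℝ × ℝ) : ℝ :=
  Real.sqrt (Real.sqrt (p.1 ^ 2 + p.2 ^ 2)) *
    Real.cos (Complex.arg (p.1 + p.2 * Complex.I) / 2)

/-- The negative half-line `P⁻ = {(t,0) : t ≤ 0}`. -/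
def Pneg : Set (ℝ × ℝ) := {p | p.1 ≤ 0 ∧ p.2 = 0}

/-- `r = √(t² + z²)`. -/
noncomputable def rad (p : ℝ × ℝ) : ℝ := Real.sqrt (p.1 ^ 2 + p.2 ^ 2)

lemma rad_nonneg (p : ℝ × ℝ) : 0 ≤ rad p := sqrt_nonneg _

lemma rad_sq (p : ℝ × ℝ) : rad p ^ 2 = p.1 ^ 2 + p.2 ^ 2 := sq_sqrt (by positivity)

lemma abs_fst_le_rad (p : ℝ × ℝ) : |p.1| ≤ rad p :=
  abs_le_of_sq_le_sq (by nlinarith [rad_sq p, sq_nonneg p.2]) (rad_nonneg p)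

lemma U_eq_sqrt (p : ℝ × ℝ) : U p = √((rad p + p.1) / 2) := by
  obtain ⟨t, z⟩ := p
  by_cases h : t = 0 ∧ z = 0
  · obtain ⟨rfl, rfl⟩ := h
    simp [U, rad]
  have hw : (t : ℂ) + z * Complex.I ≠ 0 := fun h0 =>
    h ⟨by simpa using congrArg Complex.re h0, by simpa using congrArg Complex.im h0⟩
  have hr : 0 < rad (t, z) := by
    refine sqrt_pos.mpr ?_
    rcases not_and_or.mp h with h' | h' <;> positivity
  have hcos :
      cos (Complex.arg ((t : ℂ) + z * Complex.I) / 2) = √((1 + t / rad (t, z)) / 2) := by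
    rw [cos_half (Complex.neg_pi_lt_arg _).le (Complex.arg_le_pi _), Complex.cos_arg hw,
      Complex.norm_add_mul_I]
    simp [rad]
  change √(rad (t, z)) * _ = _
  rw [hcos, ← sqrt_mul hr.le]
  congr 1
  field_simp

lemma U_nonneg (p : ℝ × ℝ) : 0 ≤ U p := by
  rw [U_eq_sqrt]
  positivity

lemma U_sq (p : ℝ × ℝ) : U p ^ 2 = (rad p + p.1) / 2 := by
  rw [U_eq_sqrt, sq_sqrt]
  linarith [neg_abs_le p.1, abs_fst_le_rad p]

section Shift

variable (p : ℝ × ℝ) (d : ℝ)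

lemma rad_shift_sq :
    rad (p.1 + d * rad p, p.2) ^ 2 = rad p ^ 2 + 2 * d * p.1 * rad p + d ^ 2 * rad p ^ 2 := by
  rw [rad_sq (p.1 + d * rad p, p.2)]
  linear_combination (-1 : ℝ) * rad_sq p

lemma rad_add_mul_fst_le_rad_shift : rad p + d * p.1 ≤ rad (p.1 + d * rad p, p.2) := by
  refine (le_abs_self _).trans (abs_le_of_sq_le_sq ?_ (rad_nonneg _))
  nlinarith [rad_shift_sq p d, rad_sq p, sq_nonneg (d * p.2)]

lemma one_sub_mul_rad_shift_add_le :
    (1 - d) * (rad (p.1 + d * rad p, p.2) + (p.1 + d * rad p)) ≤ rad p + p.1 := by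
  set r := rad p
  set B := r * (1 - d + d ^ 2) + d * p.1
  obtain ⟨ht₁, ht₂⟩ := abs_le.mp (abs_fst_le_rad p)
  have hB : 0 ≤ B := by
    rcases le_total 0 d with h | h
    · nlinarith [mul_nonneg h (by linarith : 0 ≤ p.1 + r),
        mul_nonneg (rad_nonneg p) (sq_nonneg (1 - d))]
    · nlinarith [mul_nonneg (neg_nonneg.mpr h) (by linarith : 0 ≤ r - p.1),
        mul_nonneg (rad_nonneg p) (sq_nonneg d)]
  have hgap : B ^ 2 = ((1 - d) * rad (p.1 + d * r, p.2)) ^ 2 + (d * (r + p.1)) ^ 2 := by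
    linear_combination (-(1 - d) ^ 2) * rad_shift_sq p d
  have h : (1 - d) * rad (p.1 + d * r, p.2) ≤ B :=
    (le_abs_self _).trans <| abs_le_of_sq_le_sq
      (by rw [hgap]; exact le_add_of_nonneg_right (sq_nonneg _)) hB
  linear_combination h

lemma one_add_mul_U_sq_le_U_shift_sq : (1 + d) * U p ^ 2 ≤ U (p.1 + d * rad p, p.2) ^ 2 := by
  rw [U_sq, U_sq]
  linarith [rad_add_mul_fst_le_rad_shift p d]

lemma one_sub_mul_U_shift_sq_le_U_sq :
    (1 - d) * U (p.1 + d * rad p, p.2) ^ 2 ≤ U p ^ 2 := by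
  rw [U_sq, U_sq]
  linarith [one_sub_mul_rad_shift_add_le p d]

variable {p d}

lemma U_shift_le_mul_U {α : ℝ} (hα : 0 ≤ α) (h : 1 ≤ α ^ 2 * (1 - d)) :
    U (p.1 + d * rad p, p.2) ≤ α * U p := by
  refine (le_abs_self _).trans (abs_le_of_sq_le_sq ?_ (mul_nonneg hα (U_nonneg p)))
  calc U (p.1 + d * rad p, p.2) ^ 2
      ≤ α ^ 2 * ((1 - d) * U (p.1 + d * rad p, p.2) ^ 2) := by
        rw [← mul_assoc]; exact le_mul_of_one_le_left (sq_nonneg _) h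
    _ ≤ α ^ 2 * U p ^ 2 := by gcongr; exact one_sub_mul_U_shift_sq_le_U_sq p d
    _ = (α * U p) ^ 2 := by ring

lemma mul_U_le_U_shift {α : ℝ} (h : α ^ 2 ≤ 1 + d) :
    α * U p ≤ U (p.1 + d * rad p, p.2) := by
  refine (le_abs_self _).trans (abs_le_of_sq_le_sq ?_ (U_nonneg _))
  calc (α * U p) ^ 2 ≤ (1 + d) * U p ^ 2 := by rw [mul_pow]; gcongr
    _ ≤ _ := one_add_mul_U_sq_le_U_shift_sq p d

end Shift

lemma one_le_sq_one_add_half_mul_one_sub {x c : ℝ} (hx : |x| ≤ 1 / 2) (hc : 2 * x ^ 2 ≤ c) :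
    1 ≤ (1 + x / 2) ^ 2 * (1 - (x - c)) := by
  obtain ⟨hx₁, hx₂⟩ := abs_le.mp hx
  have hc₀ : 0 ≤ c := by nlinarith
  nlinarith [mul_le_mul_of_nonneg_left (by nlinarith : (9 / 16 : ℝ) ≤ (1 + x / 2) ^ 2) hc₀,
    mul_nonneg (sq_nonneg x) (by linarith : 0 ≤ 1 / 2 - x)]

/-- For `α = 1 + (ε/2) b` with `|b| ≤ M` and `ε` sufficiently small,
`U(t + εbr - Cε²r, z) ≤ α U(t,z) ≤ U(t + εbr + Cε²r, z)`, i.e.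
`α U(t,z) = U(t + εbr + O(ε²), z)`. -/
theorem stmt16 (M : ℝ) (hM : 0 < M) :
    ∃ C : ℝ, 0 < C ∧ ∃ ε₀ : ℝ, 0 < ε₀ ∧
      ∀ b ε : ℝ, |b| ≤ M → 0 < ε → ε < ε₀ →
        ∀ p : ℝ × ℝ, p ∉ Pneg →
          U (p.1 + ε * b * rad p - C * ε ^ 2 * rad p, p.2) ≤ (1 + ε / 2 * b) * U p ∧
          (1 + ε / 2 * b) * U p ≤ U (p.1 + ε * b * rad p + C * ε ^ 2 * rad p, p.2) := by
  refine ⟨2 * M ^ 2, by positivity, 1 / (2 * M), by positivity, ?_⟩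
  intro b ε hb hε hεlt p _
  have hεM : ε * M ≤ 1 / 2 := by
    rw [lt_div_iff₀ (by positivity)] at hεlt
    linarith
  have hεb : |ε * b| ≤ 1 / 2 := by
    rw [abs_mul, abs_of_pos hε]
    nlinarith
  have hεb_sq : (ε * b) ^ 2 ≤ M ^ 2 * ε ^ 2 := by
    nlinarith [sq_le_sq' (abs_le.mp hb).1 (abs_le.mp hb).2]
  obtain ⟨hεb₁, hεb₂⟩ := abs_le.mp hεb
  constructor
  · rw [show p.1 + ε * b * rad p - 2 * M ^ 2 * ε ^ 2 * rad p
      = p.1 + (ε * b - 2 * M ^ 2 * ε ^ 2) * rad p by ring]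
    refine U_shift_le_mul_U (by linarith) ?_
    convert one_le_sq_one_add_half_mul_one_sub hεb (c := 2 * M ^ 2 * ε ^ 2) (by linarith)
      using 3
    ring
  · rw [add_assoc, ← add_mul]
    exact mul_U_le_U_shift (by nlinarith)
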